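/- Let V be a set with binary relations s and R, a distinguished element 0, and element max, satisfying: (A1) ∀x. ¬s(x,0) ∧ ¬s(max,x) ∧ (x ≠ 0 → ∃y. s(y,x)) ∧ (x ≠ max → ∃y. s(x,y)); (A2) s is both functional and injective; (A3) ∀x. R(0,x) ∧ R(x,max); together with T1[s] and the induction principle for R. Then s is acyclic with respect to R: for all x, y, if s(x,y) then ¬R(y,x). -/

import Mathlib

/-!
By the induction principle (with `P = ReflTransGen s z`), `R` is contained in the reflexive
transitive closure of `s`, so `s x y` and `R y x` give an `s`-cycle through `x`. Such a cycle
through a point reachable from `0` is impossible: since `s` is injective, the last step of a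
cycle through `v` with `s u v` comes from `u`, so the cycle rotates to one through `u`;
descending along the path from `0` yields a cycle through `0`, which has no predecessor.
-/

open Relation

namespace Relation

variable {α : Type*} {r : α → α → Prop}

theorem reflTransGen_of_induction {R : α → α → Prop}
    (hInd : ∀ (P : α → Prop) (z : α), (P z ∧ ∀ u v, P u → r u v → P v) → ∀ u, R z u → P u)
    {a b : α} (h : R a b) : ReflTransGen r a b :=
  hInd (ReflTransGen r a) a ⟨.refl, fun _ _ hu huv => hu.tail huv⟩ b h

theorem not_transGen_self_of_reflTransGen (hinj : Relator.LeftUnique r) {z u : α}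
    (hz : ∀ x, ¬ r x z) (hu : ReflTransGen r z u) : ¬ TransGen r u u := by
  induction hu with
  | refl =>
    intro hcycle
    obtain ⟨w, -, hwz⟩ := TransGen.tail'_iff.1 hcycle
    exact hz w hwz
  | tail _ huv ih =>
    intro hcycle
    obtain ⟨w, hvw, hwv⟩ := TransGen.tail'_iff.1 hcycle
    obtain rfl := hinj hwv huv
    exact ih (TransGen.head' huv hvw)

end Relation

theorem stmt_14_general {V : Type*} (s R : V → V → Prop) (zero max : V)
    (hA1 : ∀ x : V, ¬ s x zero ∧ ¬ s max x ∧
      (x ≠ zero → ∃ y, s y x) ∧ (x ≠ max → ∃ y, s x y))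
    (hA2 : ∀ x y z : V, ((s x y ∧ s x z) ∨ (s y x ∧ s z x)) → y = z)
    (hA3 : ∀ x : V, R zero x ∧ R x max)
    (hInd : ∀ (P : V → Prop) (z : V),
      (P z ∧ ∀ u v, P u → s u v → P v) → ∀ u, R z u → P u) :
    ∀ x y : V, s x y → ¬ R y x := by
  intro x y hxy hyx
  have hinj : Relator.LeftUnique s := fun a b c hac hbc => hA2 c a b (.inr ⟨hac, hbc⟩)
  have hx : ReflTransGen s zero x := reflTransGen_of_induction hInd (hA3 x).1
  exact not_transGen_self_of_reflTransGen hinj (fun w => (hA1 w).1) hx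
    (TransGen.head' hxy (reflTransGen_of_induction hInd hyx))

theorem stmt_14 {V : Type*} (s R : V → V → Prop) (zero max : V)
    (hA1 : ∀ x : V, ¬ s x zero ∧ ¬ s max x ∧
      (x ≠ zero → ∃ y, s y x) ∧ (x ≠ max → ∃ y, s x y))
    (hA2 : ∀ x y z : V, ((s x y ∧ s x z) ∨ (s y x ∧ s z x)) → y = z)
    (hA3 : ∀ x : V, R zero x ∧ R x max)
    (hT1 : ∀ u v : V, R u v ↔ (u = v ∨ ∃ w, s u w ∧ R w v))
    (hInd : ∀ (P : V → Prop) (z : V),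
      (P z ∧ ∀ u v, P u → s u v → P v) → ∀ u, R z u → P u) :
    ∀ x y : V, s x y → ¬ R y x :=
  stmt_14_general s R zero max hA1 hA2 hA3 hInd
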